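/- arXiv:0804.2656 — 2 statements merged into one kernel-verified Lean document; each statement's English description precedes it below -/
import Mathlib

section
/- Frostman's Lemma on Cantor space: let s ≥ 0 and let A be a compact subset of 2^ω with H^s(A) > 0, where H^s is the s-dimensional Hausdorff measure with respect to the standard metric on 2^ω. Then there exist a Borel probability measure μ on 2^ω with μ(2^ω ∖ A) = 0 and a constant γ > 0 such that μ(N_σ) ≤ γ·2^{-s·|σ|} for every finite binary string σ. -/
open MeasureTheory ENNReal

noncomputable local instance : MetricSpace (ℕ → Bool) := PiNat.metricSpace

/-- The basic open cylinder `N_σ` of a finite binary string `σ` in Cantor space `2^ω`. -/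
def cyl (σ : List Bool) : Set (ℕ → Bool) :=
  {x | ∀ i : Fin σ.length, x i = σ.get i}

/-!
Let `c σ` be the least value of `∑ 2^(-s|τ|)` over finite covers of `A ∩ N_σ` by cylinders `N_τ`.
It is bounded by `2^(-s|σ|)`, vanishes when `N_σ` misses `A`, satisfies
`c σ ≤ c (σ0) + c (σ1)`, and `c [] > 0`: covers of small value consist of small cylinders, so
they would witness `H^s(A) = 0`. Pushing the mass `c []` down the binary tree greedily (the left
child takes as much as `c` allows, the right child the rest) gives an additive flow below `c`.
Normalised, it is the value on cylinders of a probability measure, found as a weak limit of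
finitely supported approximations: probability measures on Cantor space form a compact space and
cylinders are clopen, so their measures pass to the limit. Cylinders missing the closed set `A`
cover its complement and carry no flow.
-/

open Set Filter Topology

lemma MeasureTheory.ProbabilityMeasure.isClosed_setOf_apply_eq {Ω : Type*}
    [MeasurableSpace Ω] [TopologicalSpace Ω] [OpensMeasurableSpace Ω] [HasOuterApproxClosed Ω]
    {E : Set Ω} (hE : IsClopen E) (c : ℝ≥0∞) :
    IsClosed {P : ProbabilityMeasure Ω | (P : Measure Ω) E = c} := by
  simp_rw [← ProbabilityMeasure.ennreal_coeFn_eq_coeFn_toMeasure]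
  refine isClosed_eq (ENNReal.continuous_coe.comp ?_) continuous_const
  exact continuous_iff_continuousAt.2 fun P =>
    ProbabilityMeasure.tendsto_measure_of_isClopen_of_tendsto tendsto_id hE

namespace Frostman

def initSeg (x : ℕ → Bool) (n : ℕ) : List Bool := List.ofFn fun i : Fin n => x i

@[simp] lemma length_initSeg (x : ℕ → Bool) (n : ℕ) : (initSeg x n).length = n := by
  simp [initSeg]

lemma initSeg_succ (x : ℕ → Bool) (n : ℕ) : initSeg x (n + 1) = initSeg x n ++ [x n] := by
  simp only [initSeg, List.ofFn_succ', List.concat_eq_append]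
  rfl

lemma mem_cyl_iff_initSeg {x : ℕ → Bool} {σ : List Bool} :
    x ∈ cyl σ ↔ initSeg x σ.length = σ := by
  simp [cyl, initSeg, List.ext_get_iff, Fin.forall_iff]

lemma mem_cyl_initSeg (x : ℕ → Bool) (n : ℕ) : x ∈ cyl (initSeg x n) := by
  rw [mem_cyl_iff_initSeg, length_initSeg]

lemma cyl_nil : cyl [] = univ := by
  ext x
  simp [mem_cyl_iff_initSeg, initSeg]

lemma mem_cyl_append_singleton {x : ℕ → Bool} {σ : List Bool} {b : Bool} :
    x ∈ cyl (σ ++ [b]) ↔ x ∈ cyl σ ∧ x σ.length = b := by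
  simp [mem_cyl_iff_initSeg, initSeg_succ]

lemma cyl_eq_union (σ : List Bool) : cyl σ = cyl (σ ++ [false]) ∪ cyl (σ ++ [true]) := by
  ext x
  cases h : x σ.length <;> simp [mem_cyl_append_singleton, h]

lemma cylinder_eq_cyl (x : ℕ → Bool) (n : ℕ) : PiNat.cylinder x n = cyl (initSeg x n) := by
  ext y
  simp [PiNat.mem_cylinder_iff, mem_cyl_iff_initSeg, initSeg, List.ofFn_inj, funext_iff,
    Fin.forall_iff]

def padFalse (σ : List Bool) : ℕ → Bool := fun i => σ.getD i false

lemma initSeg_padFalse {τ : List Bool} {n : ℕ} (h : n ≤ τ.length) :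
    initSeg (padFalse τ) n = τ.take n :=
  List.ext_getElem (by simp [h]) fun i hi _ => by
    rw [length_initSeg] at hi
    simp [initSeg, padFalse, List.getElem?_eq_getElem (hi.trans_le h)]

lemma padFalse_mem_cyl_iff {σ τ : List Bool} (h : σ.length ≤ τ.length) :
    padFalse τ ∈ cyl σ ↔ σ <+: τ := by
  rw [mem_cyl_iff_initSeg, initSeg_padFalse h, List.prefix_iff_eq_take, eq_comm]

lemma cyl_eq_cylinder (σ : List Bool) : cyl σ = PiNat.cylinder (padFalse σ) σ.length := by
  rw [cylinder_eq_cyl, initSeg_padFalse le_rfl, List.take_length]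

lemma isClopen_cyl (σ : List Bool) : IsClopen (cyl σ) := by
  refine ⟨?_, cyl_eq_cylinder σ ▸ PiNat.isOpen_cylinder _ _ _⟩
  rw [cyl_eq_cylinder, PiNat.cylinder_eq_pi]
  exact isClosed_set_pi fun _ _ => isClosed_singleton

lemma measure_compl_eq_zero_of_isClosed {μ : Measure (ℕ → Bool)} {A : Set (ℕ → Bool)}
    (hA : IsClosed A) (h : ∀ σ, Disjoint A (cyl σ) → μ (cyl σ) = 0) : μ Aᶜ = 0 := by
  have hcover : Aᶜ ⊆ ⋃ σ ∈ {σ | Disjoint A (cyl σ)}, cyl σ := fun x hx => by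
    obtain ⟨n, hn⟩ := PiNat.exists_disjoint_cylinder hA hx
    rw [cylinder_eq_cyl] at hn
    exact mem_biUnion hn (mem_cyl_initSeg x n)
  exact measure_mono_null hcover ((measure_biUnion_null_iff (to_countable _)).2 h)

section Extension

def extensions (σ : List Bool) (k : ℕ) : Finset (List Bool) :=
  Finset.univ.image fun t : Fin k → Bool => σ ++ List.ofFn t

lemma mem_extensions {σ τ : List Bool} {k : ℕ} :
    τ ∈ extensions σ k ↔ σ <+: τ ∧ τ.length = σ.length + k := by
  simp only [extensions, Finset.mem_image, Finset.mem_univ, true_and]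
  constructor
  · rintro ⟨t, rfl⟩
    simp
  · rintro ⟨⟨u, rfl⟩, hlen⟩
    obtain rfl : u.length = k := by simpa using hlen
    exact ⟨fun i => u[(i : ℕ)], by rw [List.ofFn_getElem]⟩

variable {m : List Bool → ℝ≥0∞}

lemma sum_extensions (h_add : ∀ σ, m σ = m (σ ++ [false]) + m (σ ++ [true]))
    (σ : List Bool) (k : ℕ) : ∑ τ ∈ extensions σ k, m τ = m σ := by
  rw [extensions,
    Finset.sum_image fun t _ t' _ h => List.ofFn_injective (List.append_cancel_left h)]
  induction k generalizing σ with
  | zero => simp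
  | succ k ih =>
    have step : ∀ b, ∑ t : Fin k → Bool,
        m (σ ++ List.ofFn (Fin.cons b t : Fin (k + 1) → Bool)) = m (σ ++ [b]) := fun b => by
      simp [← ih (σ ++ [b]), List.ofFn_succ]
    rw [← (Fin.consEquiv fun _ => Bool).sum_comp, Fintype.sum_prod_type, Fintype.sum_bool,
      h_add σ]
    exact (congrArg₂ (· + ·) (step true) (step false)).trans (add_comm _ _)

noncomputable def levelMeasure (m : List Bool → ℝ≥0∞) (n : ℕ) : Measure (ℕ → Bool) :=
  ∑ τ ∈ extensions [] n, m τ • Measure.dirac (padFalse τ)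

lemma levelMeasure_cyl (h_add : ∀ σ, m σ = m (σ ++ [false]) + m (σ ++ [true]))
    {σ : List Bool} {n : ℕ} (hσ : σ.length ≤ n) : levelMeasure m n (cyl σ) = m σ := by
  classical
  have hfilter : (extensions [] n).filter (σ <+: ·) = extensions σ (n - σ.length) := by
    ext τ
    simp only [Finset.mem_filter, mem_extensions, List.nil_prefix, List.length_nil, zero_add,
      true_and]
    exact ⟨fun h => ⟨h.2, by omega⟩, fun h => ⟨by omega, h.1⟩⟩
  calc levelMeasure m n (cyl σ) = ∑ τ ∈ extensions [] n, if σ <+: τ then m τ else 0 := by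
        simp only [levelMeasure, Measure.coe_finsetSum, Finset.sum_apply, Measure.smul_apply,
          Measure.dirac_apply' _ (isClopen_cyl σ).isOpen.measurableSet, smul_eq_mul]
        refine Finset.sum_congr rfl fun τ hτ => ?_
        rw [indicator_apply, padFalse_mem_cyl_iff (by simp [(mem_extensions.1 hτ).2, hσ])]
        split_ifs <;> simp
    _ = m σ := by rw [← Finset.sum_filter, hfilter, sum_extensions h_add]

theorem exists_isProbabilityMeasure_cyl_eq (h_nil : m [] = 1)
    (h_add : ∀ σ, m σ = m (σ ++ [false]) + m (σ ++ [true])) :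
    ∃ μ : Measure (ℕ → Bool), IsProbabilityMeasure μ ∧ ∀ σ, μ (cyl σ) = m σ := by
  have hprob : ∀ n, IsProbabilityMeasure (levelMeasure m n) := fun n =>
    ⟨by rw [← cyl_nil, levelMeasure_cyl h_add (Nat.zero_le n), h_nil]⟩
  let ν : ℕ → ProbabilityMeasure (ℕ → Bool) := fun n => ⟨levelMeasure m n, hprob n⟩
  obtain ⟨P, hP⟩ := exists_clusterPt_of_compactSpace (map ν atTop)
  refine ⟨P, inferInstance, fun σ => ?_⟩
  exact (ProbabilityMeasure.isClosed_setOf_apply_eq (isClopen_cyl σ) (m σ)).mem_of_mapClusterPt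
    hP (eventually_atTop.2 ⟨σ.length, fun n hn => levelMeasure_cyl h_add hn⟩)

end Extension

section Content

variable {s : ℝ}

noncomputable def weight (s : ℝ) (n : ℕ) : ℝ≥0∞ := 2 ^ (-s * n)

lemma weight_zero (s : ℝ) : weight s 0 = 1 := by simp [weight]

lemma weight_pos (s : ℝ) (n : ℕ) : 0 < weight s n :=
  ENNReal.rpow_pos (by norm_num) (by norm_num)

lemma weight_anti (hs : 0 ≤ s) : Antitone (weight s) := fun a b hab =>
  ENNReal.rpow_le_rpow_of_exponent_le (by norm_num)
    (by nlinarith [(Nat.cast_le (α := ℝ)).2 hab])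

lemma weight_eq_inv_two_pow_rpow (s : ℝ) (n : ℕ) : weight s n = ((2 : ℝ≥0∞)⁻¹ ^ n) ^ s := by
  rw [weight, ← ENNReal.rpow_natCast, ← ENNReal.rpow_neg_one, ← ENNReal.rpow_mul,
    ← ENNReal.rpow_mul]
  ring_nf

noncomputable def cylContent (s : ℝ) (S : Set (ℕ → Bool)) : ℝ≥0∞ :=
  ⨅ (F : Finset (List Bool)) (_ : S ⊆ ⋃ τ ∈ F, cyl τ), ∑ τ ∈ F, weight s τ.length

lemma cylContent_mono {S T : Set (ℕ → Bool)} (h : S ⊆ T) : cylContent s S ≤ cylContent s T :=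
  iInf₂_mono' fun F hT => ⟨F, h.trans hT, le_rfl⟩

lemma cylContent_empty : cylContent s ∅ = 0 :=
  le_antisymm ((iInf₂_le (∅ : Finset (List Bool)) (by simp)).trans_eq Finset.sum_empty) zero_le

lemma cylContent_cyl_le (σ : List Bool) : cylContent s (cyl σ) ≤ weight s σ.length :=
  (iInf₂_le {σ} (by simp)).trans_eq (Finset.sum_singleton _ _)

lemma cylContent_union_le (S T : Set (ℕ → Bool)) :
    cylContent s (S ∪ T) ≤ cylContent s S + cylContent s T := by
  classical
  calc cylContent s (S ∪ T)
      ≤ ⨅ (G : Finset (List Bool)) (_ : T ⊆ ⋃ τ ∈ G, cyl τ) (F : Finset (List Bool))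
          (_ : S ⊆ ⋃ τ ∈ F, cyl τ), (∑ τ ∈ F, weight s τ.length + ∑ τ ∈ G, weight s τ.length) :=
        le_iInf₂ fun G hG => le_iInf₂ fun F hF => by
          refine (iInf₂_le (F ∪ G) ?_).trans ?_
          · rw [Finset.set_biUnion_union]
            exact union_subset_union hF hG
          · rw [← Finset.sum_union_inter]
            exact le_self_add
    _ = cylContent s S + cylContent s T := by
        simp only [cylContent, ENNReal.iInf_add, ENNReal.add_iInf]

lemma ediam_cyl_le (σ : List Bool) : Metric.ediam (cyl σ) ≤ 2⁻¹ ^ σ.length := by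
  refine Metric.ediam_le fun x hx y hy => ?_
  have hxy : x ∈ PiNat.cylinder y σ.length := by
    rwa [cylinder_eq_cyl, mem_cyl_iff_initSeg.1 hy]
  rw [edist_dist]
  refine ENNReal.ofReal_le_of_le_toReal ?_
  simpa using PiNat.mem_cylinder_iff_dist_le.1 hxy

lemma hausdorffMeasure_eq_zero_of_cylContent_eq_zero (hs : 0 ≤ s) {S : Set (ℕ → Bool)}
    (h : cylContent s S = 0) : μH[s] S = 0 := by
  -- The bound `weight s j` forces the strings of the cover to be longer than `j`.
  have hcovers : ∀ j : ℕ, ∃ F : Finset (List Bool), S ⊆ ⋃ τ ∈ F, cyl τ ∧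
      ∑ τ ∈ F, weight s τ.length < min (2⁻¹ ^ j) (weight s j) := fun j => by
    have : cylContent s S < min (2⁻¹ ^ j) (weight s j) :=
      h ▸ lt_min (ENNReal.pow_pos (by norm_num) j) (weight_pos s j)
    simpa only [cylContent, iInf_lt_iff, exists_prop] using this
  choose F hcover hsum using hcovers
  have hlong : ∀ j, ∀ τ ∈ F j, j < τ.length := fun j τ hτ => (weight_anti hs).reflect_lt <|
    calc weight s τ.length ≤ ∑ τ ∈ F j, weight s τ.length :=
          Finset.single_le_sum (f := fun τ : List Bool => weight s τ.length)
            (fun _ _ => zero_le) hτ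
      _ < min (2⁻¹ ^ j) (weight s j) := hsum j
      _ ≤ weight s j := min_le_right _ _
  have hdiam : ∀ j, ∀ τ : F j, Metric.ediam (cyl τ) ≤ 2⁻¹ ^ j := fun j τ =>
    (ediam_cyl_le τ).trans (pow_le_pow_right_of_le_one' (by norm_num) (hlong j τ τ.2).le)
  have hgeom : Tendsto (fun j : ℕ => (2⁻¹ : ℝ≥0∞) ^ j) atTop (𝓝 0) :=
    ENNReal.tendsto_pow_atTop_nhds_zero_of_lt_one (by norm_num)
  refine nonpos_iff_eq_zero.1 ?_
  calc μH[s] S ≤ liminf (fun j => ∑ τ : F j, Metric.ediam (cyl τ) ^ s) atTop :=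
        Measure.hausdorffMeasure_le_liminf_sum s S _ hgeom (fun j (τ : F j) => cyl τ)
          (Eventually.of_forall hdiam)
          (Eventually.of_forall fun j => by rw [iUnion_subtype]; exact hcover j)
    _ ≤ liminf (fun j : ℕ => (2⁻¹ : ℝ≥0∞) ^ j) atTop := by
        refine liminf_le_liminf (Eventually.of_forall fun j => ?_)
        rw [Finset.sum_coe_sort (F j) fun τ => Metric.ediam (cyl τ) ^ s]
        calc ∑ τ ∈ F j, Metric.ediam (cyl τ) ^ s ≤ ∑ τ ∈ F j, weight s τ.length :=
              Finset.sum_le_sum fun τ _ => (ENNReal.rpow_le_rpow (ediam_cyl_le τ) hs).trans_eq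
                (weight_eq_inv_two_pow_rpow s _).symm
          _ ≤ 2⁻¹ ^ j := (hsum j).le.trans (min_le_left _ _)
    _ = 0 := hgeom.liminf_eq

end Content

section GreedyFlow

variable (c : List Bool → ℝ≥0∞)

/-- The greedy flow, indexed by reversed strings so that the recursion is structural. -/
def greedyFlowRev : List Bool → ℝ≥0∞
  | [] => c []
  | false :: ρ => min (c (ρ.reverse ++ [false])) (greedyFlowRev ρ)
  | true :: ρ => greedyFlowRev ρ - min (c (ρ.reverse ++ [false])) (greedyFlowRev ρ)

def greedyFlow (σ : List Bool) : ℝ≥0∞ := greedyFlowRev c σ.reverse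

lemma greedyFlow_append_false (σ : List Bool) :
    greedyFlow c (σ ++ [false]) = min (c (σ ++ [false])) (greedyFlow c σ) := by
  simp [greedyFlow, greedyFlowRev]

lemma greedyFlow_append_true (σ : List Bool) :
    greedyFlow c (σ ++ [true]) = greedyFlow c σ - greedyFlow c (σ ++ [false]) := by
  simp [greedyFlow, greedyFlowRev]

lemma greedyFlow_eq_add (σ : List Bool) :
    greedyFlow c σ = greedyFlow c (σ ++ [false]) + greedyFlow c (σ ++ [true]) := by
  rw [greedyFlow_append_true, add_tsub_cancel_of_le]
  rw [greedyFlow_append_false]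
  exact min_le_right _ _

lemma greedyFlow_le (hc : ∀ σ, c σ ≤ c (σ ++ [false]) + c (σ ++ [true])) (σ : List Bool) :
    greedyFlow c σ ≤ c σ := by
  induction σ using List.reverseRecOn with
  | nil => exact le_rfl
  | append_singleton σ b ih =>
    cases b
    · rw [greedyFlow_append_false]
      exact min_le_left _ _
    · rw [greedyFlow_append_true, tsub_le_iff_left, greedyFlow_append_false]
      rcases le_total (c (σ ++ [false])) (greedyFlow c σ) with h | h
      · rw [min_eq_left h]
        exact ih.trans (hc σ)
      · rw [min_eq_right h]
        exact le_add_right le_rfl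

end GreedyFlow

end Frostman

open Frostman in
theorem stmt1 (s : ℝ) (hs : 0 ≤ s) (A : Set (ℕ → Bool)) (hA : IsCompact A)
    (hpos : 0 < μH[s] A) :
    ∃ (μ : Measure (ℕ → Bool)) (γ : ℝ), IsProbabilityMeasure μ ∧ μ Aᶜ = 0 ∧ 0 < γ ∧
      ∀ σ : List Bool, μ (cyl σ) ≤ ENNReal.ofReal γ * (2 : ℝ≥0∞) ^ (-s * (σ.length : ℝ)) := by
  set c : List Bool → ℝ≥0∞ := fun σ => cylContent s (A ∩ cyl σ)
  have hc_le : ∀ σ, c σ ≤ weight s σ.length := fun σ =>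
    (cylContent_mono inter_subset_right).trans (cylContent_cyl_le σ)
  have hc_sub : ∀ σ, c σ ≤ c (σ ++ [false]) + c (σ ++ [true]) := fun σ => by
    simp only [c]
    rw [cyl_eq_union σ, inter_union_distrib_left]
    exact cylContent_union_le _ _
  have hc_pos : c [] ≠ 0 := fun h => hpos.ne' <|
    hausdorffMeasure_eq_zero_of_cylContent_eq_zero hs (by simpa [c, cyl_nil] using h)
  have hc_top : c [] ≠ ⊤ := ((hc_le []).trans_lt (by simp [weight_zero])).ne
  obtain ⟨μ, hμ, hμ_cyl⟩ := exists_isProbabilityMeasure_cyl_eq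
    (m := fun σ => (c [])⁻¹ * greedyFlow c σ) (ENNReal.inv_mul_cancel hc_pos hc_top)
    (fun σ => by rw [greedyFlow_eq_add, mul_add])
  have hγ : 0 < (c []).toReal := ENNReal.toReal_pos hc_pos hc_top
  refine ⟨μ, (c []).toReal⁻¹, hμ, ?_, inv_pos.2 hγ, fun σ => ?_⟩
  · refine measure_compl_eq_zero_of_isClosed hA.isClosed fun σ hσ => ?_
    have hc_zero : c σ = 0 := by simp only [c, hσ.inter_eq, cylContent_empty]
    rw [hμ_cyl, nonpos_iff_eq_zero.1 ((greedyFlow_le c hc_sub σ).trans_eq hc_zero), mul_zero]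
  · rw [hμ_cyl, ENNReal.ofReal_inv_of_pos hγ, ENNReal.ofReal_toReal hc_top]
    gcongr
    exact (greedyFlow_le c hc_sub σ).trans (hc_le σ)
end

section
/- Let 0 ≤ s < t be real numbers, let ε > 0, and let W be a set of finite binary strings such that for every prefix-free subset V ⊆ W one has Σ_{σ ∈ V} 2^{-s·|σ|} ≤ ε. Then Σ_{σ ∈ W} 2^{-t·|σ|} ≤ ε/(1 - 2^{-(t-s)}). -/
/-! The strings of `W` of a fixed length `n` form a prefix-free set, so they contribute at most
`2^(-(t-s)n) ε` to the sum with exponent `t`; summing this geometric series over `n` gives the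
bound. -/

open MeasureTheory ENNReal

/-- A set of finite binary strings is prefix-free (an antichain for the prefix order)
if none of its elements is a proper initial segment of another. -/
def IsPrefixFree (V : Set (List Bool)) : Prop :=
  ∀ σ ∈ V, ∀ τ ∈ V, σ <+: τ → σ = τ

theorem ENNReal.tsum_subtype_eq_tsum_tsum_inter_fiber {β γ : Type*} (W : Set β) (g : β → γ)
    (f : β → ℝ≥0∞) : ∑' x : W, f x = ∑' c, ∑' x : ↥(W ∩ g ⁻¹' {c}), f x := by
  rw [tsum_subtype, ← ENNReal.tsum_fiberwise _ g]
  refine tsum_congr fun c => ?_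
  rw [tsum_subtype, tsum_subtype, Set.indicator_indicator, Set.inter_comm]

theorem isPrefixFree_of_forall_length_eq {V : Set (List Bool)} {n : ℕ}
    (hV : ∀ σ ∈ V, σ.length = n) : IsPrefixFree V :=
  fun σ hσ τ hτ hστ => hστ.eq_of_length ((hV σ hσ).trans (hV τ hτ).symm)

theorem ENNReal.rpow_neg_mul_natCast_eq {a : ℝ≥0∞} (ha₀ : a ≠ 0) (ha : a ≠ ∞) (s t : ℝ) (n : ℕ) :
    a ^ (-t * n) = (a ^ (-(t - s))) ^ n * a ^ (-s * n) := by
  rw [← ENNReal.rpow_natCast, ← ENNReal.rpow_mul, ← ENNReal.rpow_add _ _ ha₀ ha]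
  ring_nf

theorem tsum_inter_length_eq_le {s t : ℝ} {c : ℝ≥0∞} {W : Set (List Bool)}
    (hW : ∀ V ⊆ W, IsPrefixFree V →
      ∑' σ : V, (2 : ℝ≥0∞) ^ (-s * ((σ : List Bool).length : ℝ)) ≤ c) (n : ℕ) :
    ∑' σ : ↥(W ∩ List.length ⁻¹' {n}), (2 : ℝ≥0∞) ^ (-t * ((σ : List Bool).length : ℝ)) ≤
      ((2 : ℝ≥0∞) ^ (-(t - s))) ^ n * c := by
  have hlen : ∀ σ ∈ W ∩ List.length ⁻¹' {n}, σ.length = n := fun σ hσ => hσ.2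
  calc ∑' σ : ↥(W ∩ List.length ⁻¹' {n}), (2 : ℝ≥0∞) ^ (-t * ((σ : List Bool).length : ℝ))
      = ∑' σ : ↥(W ∩ List.length ⁻¹' {n}),
          ((2 : ℝ≥0∞) ^ (-(t - s))) ^ n * 2 ^ (-s * ((σ : List Bool).length : ℝ)) :=
        tsum_congr fun σ => by
          rw [hlen σ σ.2, ENNReal.rpow_neg_mul_natCast_eq (by norm_num) (by norm_num) s]
    _ = ((2 : ℝ≥0∞) ^ (-(t - s))) ^ n *
          ∑' σ : ↥(W ∩ List.length ⁻¹' {n}), 2 ^ (-s * ((σ : List Bool).length : ℝ)) :=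
        ENNReal.tsum_mul_left
    _ ≤ ((2 : ℝ≥0∞) ^ (-(t - s))) ^ n * c :=
        mul_le_mul_right (hW _ Set.inter_subset_left (isPrefixFree_of_forall_length_eq hlen)) _

theorem ENNReal.tsum_ofReal_pow_mul_ofReal {x : ℝ} (hx₀ : 0 ≤ x) (hx₁ : x < 1) (ε : ℝ) :
    ∑' n : ℕ, ENNReal.ofReal x ^ n * ENNReal.ofReal ε = ENNReal.ofReal (ε / (1 - x)) := by
  rw [ENNReal.tsum_mul_right, ENNReal.tsum_geometric, ENNReal.ofReal_div_of_pos (by linarith),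
    ENNReal.ofReal_sub _ hx₀, ENNReal.ofReal_one, ENNReal.div_eq_inv_mul]

theorem stmt6_general (s t ε : ℝ) (hst : s < t)
    (W : Set (List Bool))
    (hW : ∀ V ⊆ W, IsPrefixFree V →
      ∑' σ : V, (2 : ℝ≥0∞) ^ (-s * ((σ : List Bool).length : ℝ)) ≤ ENNReal.ofReal ε) :
    ∑' σ : W, (2 : ℝ≥0∞) ^ (-t * ((σ : List Bool).length : ℝ)) ≤
      ENNReal.ofReal (ε / (1 - 2 ^ (-(t - s)))) := by
  have hr : ENNReal.ofReal ((2 : ℝ) ^ (-(t - s))) = (2 : ℝ≥0∞) ^ (-(t - s)) := by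
    rw [← ENNReal.ofReal_rpow_of_pos two_pos, ENNReal.ofReal_ofNat]
  calc ∑' σ : W, (2 : ℝ≥0∞) ^ (-t * ((σ : List Bool).length : ℝ))
      = ∑' n, ∑' σ : ↥(W ∩ List.length ⁻¹' {n}),
          (2 : ℝ≥0∞) ^ (-t * ((σ : List Bool).length : ℝ)) :=
        ENNReal.tsum_subtype_eq_tsum_tsum_inter_fiber W List.length
          fun σ => (2 : ℝ≥0∞) ^ (-t * (σ.length : ℝ))
    _ ≤ ∑' n : ℕ, ((2 : ℝ≥0∞) ^ (-(t - s))) ^ n * ENNReal.ofReal ε :=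
        ENNReal.tsum_le_tsum (tsum_inter_length_eq_le hW)
    _ = ENNReal.ofReal (ε / (1 - 2 ^ (-(t - s)))) := by
        rw [← hr, ENNReal.tsum_ofReal_pow_mul_ofReal (by positivity)
          (Real.rpow_lt_one_of_one_lt_of_neg one_lt_two (by linarith))]

theorem stmt6 (s t ε : ℝ) (hs : 0 ≤ s) (hst : s < t) (hε : 0 < ε)
    (W : Set (List Bool))
    (hW : ∀ V ⊆ W, IsPrefixFree V →
      ∑' σ : V, (2 : ℝ≥0∞) ^ (-s * ((σ : List Bool).length : ℝ)) ≤ ENNReal.ofReal ε) :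
    ∑' σ : W, (2 : ℝ≥0∞) ^ (-t * ((σ : List Bool).length : ℝ)) ≤
      ENNReal.ofReal (ε / (1 - 2 ^ (-(t - s)))) :=
  stmt6_general s t ε hst W hW
end
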